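/- Let G = C(n; a_1,b_1; …; a_k,b_k) be a k-paired circulant with k ≥ 1, and suppose a_ℓ = 1 for some ℓ ∈ [k]. Then G is isomorphic to the lexicographic product of the complete graph K_{b_ℓ} and the (k−1)-paired circulant of order n/b_ℓ generated by the pairs (A_i, B_i) for i ∈ [k] \ {ℓ}, where A_i = a_i / gcd(a_i, b_ℓ) and B_i = b_i · gcd(a_i, b_ℓ)/gcd(a_i·b_i, b_ℓ). -/

import Mathlib

open SimpleGraph Finset

/-- The circulant graph `C_n(D)` on vertex set `ZMod n` with distance set
`D ⊆ {1, …, n-1}`: distinct vertices `i, j` are adjacent iff `(i - j) mod n ∈ D`. -/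
def circulant (n : ℕ) (D : Finset ℕ) : SimpleGraph (ZMod n) :=
  SimpleGraph.fromRel (fun i j => (i - j).val ∈ D)

/-- A graph is a CIS graph if every maximal clique and every maximal stable set
(equivalently, every maximal clique of the complement) intersect. -/
def SimpleGraph.IsCIS {V : Type*} (G : SimpleGraph V) : Prop :=
  ∀ C S : Set V, Maximal G.IsClique C → Maximal Gᶜ.IsClique S → (C ∩ S).Nonempty

/-- The distance set `{d ∈ {1,…,n-1} : a ∣ d ∧ a*b ∤ d}` of a pair `(a, b)`. -/
def pairedD (n a b : ℕ) : Finset ℕ :=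
  (Finset.Icc 1 (n - 1)).filter (fun d => a ∣ d ∧ ¬ (a * b) ∣ d)

/-- The `k`-paired circulant `C(n; a_1,b_1; …; a_k,b_k)` (index type `ι`). -/
def pairedCirculant (n : ℕ) {ι : Type*} [Fintype ι] (a b : ι → ℕ) : SimpleGraph (ZMod n) :=
  circulant n (Finset.univ.biUnion (fun i => pairedD n (a i) (b i)))

/-- The lexicographic product of two simple graphs. -/
def lexProd {α β : Type*} (G : SimpleGraph α) (H : SimpleGraph β) : SimpleGraph (α × β) where
  Adj p q := G.Adj p.1 q.1 ∨ (p.1 = q.1 ∧ H.Adj p.2 q.2)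
  symm := by
    constructor
    intro p q h
    rcases h with h | ⟨h1, h2⟩
    · exact Or.inl h.symm
    · exact Or.inr ⟨h1.symm, h2.symm⟩
  loopless := by
    constructor
    intro p h
    rcases h with h | ⟨_, h⟩
    · exact G.loopless.irrefl _ h
    · exact H.loopless.irrefl _ h

/-!
Write `n = b_ℓ m` and identify `ℤ/n` with `Fin b_ℓ × ℤ/m` via `(r, s) ↦ r + b_ℓ s`.
As `a_ℓ = 1`, every nonzero difference not divisible by `b_ℓ` lies in `D_ℓ`, so distinct
residue classes mod `b_ℓ` are completely joined: this is the factor `K_{b_ℓ}`. Inside a class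
the differences are `b_ℓ t` with `0 < t < m`; the pair `ℓ` contributes none of them, and for
`i ≠ ℓ` the identities `c ∣ b_ℓ t ↔ c / gcd(c, b_ℓ) ∣ t` and
`A_i B_i = a_i b_i / gcd(a_i b_i, b_ℓ)` turn `b_ℓ t ∈ D_i` into `t ∈ D'_i`, the distance set
of the pair `(A_i, B_i)` modulo `m`.
-/

theorem dvd_mul_iff_div_gcd_dvd {a c : ℕ} (t : ℕ) (hc : 0 < c) :
    a ∣ c * t ↔ a / a.gcd c ∣ t := by
  rw [Nat.div_dvd_iff_dvd_mul (Nat.gcd_dvd_left a c) (Nat.gcd_pos_of_pos_right a hc),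
    Nat.dvd_gcd_mul_iff_dvd_mul]

theorem div_gcd_mul_mul_gcd_div_gcd (a b : ℕ) {c : ℕ} (hc : 0 < c) :
    a / a.gcd c * (b * a.gcd c / (a * b).gcd c) = a * b / (a * b).gcd c := by
  have hdvd : (a * b).gcd c ∣ b * a.gcd c := by
    rw [mul_comm b, ← Nat.gcd_mul_right]
    exact Nat.gcd_dvd_gcd_mul_right_right _ _ _
  rw [Nat.div_mul_div_comm (Nat.gcd_dvd_left a c) hdvd,
    show a * (b * a.gcd c) = a * b * a.gcd c by ring, mul_comm (a.gcd c),
    Nat.mul_div_mul_right _ _ (Nat.gcd_pos_of_pos_right a hc)]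

theorem mem_pairedD {n a b d : ℕ} :
    d ∈ pairedD n a b ↔ 0 < d ∧ d < n ∧ a ∣ d ∧ ¬ a * b ∣ d := by
  simp only [pairedD, mem_filter, mem_Icc]
  omega

theorem mul_mem_pairedD_iff {a b c m t : ℕ} (hc : 0 < c) (ht : 0 < t) (htm : t < m) :
    c * t ∈ pairedD (c * m) a b ↔
      t ∈ pairedD m (a / a.gcd c) (b * a.gcd c / (a * b).gcd c) := by
  rw [mem_pairedD, mem_pairedD, div_gcd_mul_mul_gcd_div_gcd a b hc,
    ← dvd_mul_iff_div_gcd_dvd t hc, ← dvd_mul_iff_div_gcd_dvd t hc]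
  have hctm : c * t < c * m := Nat.mul_lt_mul_of_pos_left htm hc
  simp only [ht, htm, hctm, Nat.mul_pos hc ht, true_and]

theorem circulant_adj_iff {n : ℕ} {D : Finset ℕ} {x y : ZMod n} :
    (circulant n D).Adj x y ↔ x ≠ y ∧ ((x - y).val ∈ D ∨ (y - x).val ∈ D) :=
  fromRel_adj _ _ _

theorem lexProd_top_adj_iff {α β : Type*} {H : SimpleGraph β} {p q : α × β} :
    (lexProd ⊤ H).Adj p q ↔ p.1 ≠ q.1 ∨ (p.1 = q.1 ∧ H.Adj p.2 q.2) :=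
  Iff.rfl

theorem dvd_val_iff_cast_eq_zero {n c : ℕ} [NeZero n] (x : ZMod n) :
    c ∣ x.val ↔ (x.cast : ZMod c) = 0 := by
  rw [ZMod.cast_eq_val, ZMod.natCast_eq_zero_iff]

theorem natCast_mul_val_sub {b m : ℕ} [NeZero m] (s t : ZMod m) :
    ((b * (s - t).val : ℕ) : ZMod (b * m)) =
      ((b * s.val : ℕ) : ZMod (b * m)) - (b * t.val : ℕ) := by
  have hmod : ((s - t).val : ℤ) ≡ s.val - t.val [ZMOD m] := by
    rw [← ZMod.intCast_eq_intCast_iff]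
    push_cast
    simp only [ZMod.natCast_val, ZMod.cast_id', id]
  have hmul := (ZMod.intCast_eq_intCast_iff _ _ _).mpr (hmod.mul_left' (c := b))
  push_cast at hmul ⊢
  linear_combination hmul

def blockEmbedding {b m : ℕ} (p : Fin b × ZMod m) : ZMod (b * m) :=
  ((p.1 : ℕ) + b * p.2.val : ℕ)

section BlockDecomposition

variable {b m : ℕ} [NeZero b] [NeZero m]

theorem dvd_val_blockEmbedding_sub_iff (p q : Fin b × ZMod m) :
    b ∣ (blockEmbedding p - blockEmbedding q).val ↔ p.1 = q.1 := by
  have hcast : ∀ x : ℕ, ((x : ZMod (b * m)).cast : ZMod b) = x :=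
    ZMod.cast_natCast (Dvd.intro m rfl)
  rw [dvd_val_iff_cast_eq_zero, ZMod.cast_sub (Dvd.intro m rfl), blockEmbedding, blockEmbedding,
    hcast, hcast]
  push_cast
  simp only [ZMod.natCast_self, zero_mul, add_zero]
  rw [sub_eq_zero, ZMod.natCast_eq_natCast_iff', Nat.mod_eq_of_lt p.1.isLt,
    Nat.mod_eq_of_lt q.1.isLt, Fin.val_inj]

theorem val_blockEmbedding_sub_of_fst_eq {p q : Fin b × ZMod m} (h : p.1 = q.1) :
    (blockEmbedding p - blockEmbedding q).val = b * (p.2 - q.2).val := by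
  have hlt : b * (p.2 - q.2).val < b * m :=
    Nat.mul_lt_mul_of_pos_left (ZMod.val_lt _) (Nat.pos_of_neZero b)
  rw [← ZMod.val_cast_of_lt hlt, natCast_mul_val_sub, blockEmbedding, blockEmbedding, h]
  push_cast
  ring_nf

theorem blockEmbedding_injective : Function.Injective (blockEmbedding (b := b) (m := m)) := by
  intro p q hpq
  have hfst : p.1 = q.1 := by
    rw [← dvd_val_blockEmbedding_sub_iff, hpq, sub_self, ZMod.val_zero]
    exact dvd_zero b
  have hsnd : b * (p.2 - q.2).val = 0 := by
    rw [← val_blockEmbedding_sub_of_fst_eq hfst, hpq, sub_self, ZMod.val_zero]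
  rw [mul_eq_zero, ZMod.val_eq_zero, sub_eq_zero] at hsnd
  exact Prod.ext hfst (hsnd.resolve_left (NeZero.ne b))

noncomputable def blockEquiv : Fin b × ZMod m ≃ ZMod (b * m) :=
  Equiv.ofBijective blockEmbedding <| (Fintype.bijective_iff_injective_and_card _).mpr
    ⟨blockEmbedding_injective, by simp [ZMod.card]⟩

noncomputable def circulantIsoLexProd {D D' : Finset ℕ}
    (hD : ∀ d, 0 < d → d < b * m → ¬ b ∣ d → d ∈ D)
    (hDD' : ∀ t, 0 < t → t < m → (b * t ∈ D ↔ t ∈ D')) :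
    circulant (b * m) D ≃g lexProd (⊤ : SimpleGraph (Fin b)) (circulant m D') :=
  RelIso.symm
  { toEquiv := blockEquiv
    map_rel_iff' := by
      rintro ⟨r₁, s₁⟩ ⟨r₂, s₂⟩
      simp only [blockEquiv, Equiv.ofBijective_apply, circulant_adj_iff, lexProd_top_adj_iff,
        blockEmbedding_injective.ne_iff]
      by_cases hr : r₁ = r₂
      · subst hr
        rw [val_blockEmbedding_sub_of_fst_eq (p := (r₁, s₁)) (q := (r₁, s₂)) rfl,
          val_blockEmbedding_sub_of_fst_eq (p := (r₁, s₂)) (q := (r₁, s₁)) rfl]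
        by_cases hs : s₁ = s₂
        · simp [hs]
        have hval_pos : ∀ {s t : ZMod m}, s ≠ t → 0 < (s - t).val := fun h =>
          ZMod.val_pos.mpr (sub_ne_zero.mpr h)
        rw [hDD' _ (hval_pos hs) (ZMod.val_lt _), hDD' _ (hval_pos (Ne.symm hs)) (ZMod.val_lt _)]
        simp [hs]
      · have hne : blockEmbedding (r₁, s₁) ≠ blockEmbedding (r₂, s₂) :=
          blockEmbedding_injective.ne (by simp [hr])
        have hmem : (blockEmbedding (r₁, s₁) - blockEmbedding (r₂, s₂)).val ∈ D :=
          hD _ (ZMod.val_pos.mpr (sub_ne_zero.mpr hne)) (ZMod.val_lt _)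
            (by rw [dvd_val_blockEmbedding_sub_iff]; exact hr)
        simp [hr, hmem] }

end BlockDecomposition

section PairedCirculant

variable {ι : Type*} [Fintype ι] {a b : ι → ℕ} {ℓ : ι}

theorem mem_biUnion_pairedD_of_not_dvd {n d : ℕ} (hℓ : a ℓ = 1) (hd : 0 < d) (hdn : d < n)
    (h : ¬ b ℓ ∣ d) : d ∈ univ.biUnion (fun i => pairedD n (a i) (b i)) :=
  mem_biUnion.mpr ⟨ℓ, mem_univ _, mem_pairedD.mpr ⟨hd, hdn, by simp [hℓ, h]⟩⟩

theorem mul_mem_biUnion_pairedD_iff [DecidableEq ι] {m t : ℕ} (hℓ : a ℓ = 1)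
    (hbℓ : 0 < b ℓ) (ht : 0 < t) (htm : t < m) :
    b ℓ * t ∈ univ.biUnion (fun i => pairedD (b ℓ * m) (a i) (b i)) ↔
      t ∈ univ.biUnion (fun i : {i // i ≠ ℓ} =>
        pairedD m (a i / (a i).gcd (b ℓ))
          (b i * (a i).gcd (b ℓ) / (a i * b i).gcd (b ℓ))) := by
  simp only [mem_biUnion, mem_univ, true_and]
  constructor
  · rintro ⟨i, hi⟩
    have hiℓ : i ≠ ℓ := by
      rintro rfl
      simp [mem_pairedD, hℓ] at hi
    exact ⟨⟨i, hiℓ⟩, (mul_mem_pairedD_iff hbℓ ht htm).mp hi⟩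
  · rintro ⟨i, hi⟩
    exact ⟨i, (mul_mem_pairedD_iff hbℓ ht htm).mpr hi⟩

end PairedCirculant

theorem stmt_10_general (n k : ℕ) (hn : 0 < n) (a b : Fin k → ℕ)
    (hab : ∀ i, a i * b i ∣ n)
    (ℓ : Fin k) (hℓ : a ℓ = 1) :
    Nonempty (pairedCirculant n a b ≃g
      lexProd (⊤ : SimpleGraph (Fin (b ℓ)))
        (pairedCirculant (n / b ℓ)
          (fun i : {i : Fin k // i ≠ ℓ} => a i.1 / Nat.gcd (a i.1) (b ℓ))
          (fun i : {i : Fin k // i ≠ ℓ} =>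
            b i.1 * Nat.gcd (a i.1) (b ℓ) / Nat.gcd (a i.1 * b i.1) (b ℓ)))) := by
  obtain ⟨m, rfl⟩ : b ℓ ∣ n := by simpa [hℓ] using hab ℓ
  have hbℓ : 0 < b ℓ := Nat.pos_of_mul_pos_right hn
  have : NeZero (b ℓ) := ⟨hbℓ.ne'⟩
  have : NeZero m := ⟨(Nat.pos_of_mul_pos_left hn).ne'⟩
  rw [Nat.mul_div_cancel_left m hbℓ]
  exact ⟨circulantIsoLexProd (fun _ hd hdn h => mem_biUnion_pairedD_of_not_dvd hℓ hd hdn h)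
    (fun _ ht htm => mul_mem_biUnion_pairedD_iff hℓ hbℓ ht htm)⟩

/-- If `a_ℓ = 1` for some `ℓ`, then the `k`-paired circulant is isomorphic to
the lexicographic product of `K_{b_ℓ}` and the `(k-1)`-paired circulant of order `n / b_ℓ`
generated by the pairs `(A_i, B_i)`, `i ≠ ℓ`, where `A_i = a_i / gcd(a_i, b_ℓ)` and
`B_i = b_i · gcd(a_i, b_ℓ) / gcd(a_i b_i, b_ℓ)`. -/
theorem stmt_10 (n k : ℕ) (hn : 0 < n) (a b : Fin k → ℕ)
    (ha : ∀ i, 0 < a i) (hb : ∀ i, 0 < b i) (hab : ∀ i, a i * b i ∣ n)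
    (ℓ : Fin k) (hℓ : a ℓ = 1) :
    Nonempty (pairedCirculant n a b ≃g
      lexProd (⊤ : SimpleGraph (Fin (b ℓ)))
        (pairedCirculant (n / b ℓ)
          (fun i : {i : Fin k // i ≠ ℓ} => a i.1 / Nat.gcd (a i.1) (b ℓ))
          (fun i : {i : Fin k // i ≠ ℓ} =>
            b i.1 * Nat.gcd (a i.1) (b ℓ) / Nat.gcd (a i.1 * b i.1) (b ℓ)))) :=
  stmt_10_general n k hn a b hab ℓ hℓ
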